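/- Let X be an infinite-dimensional real Banach space and let (A_n) be an approximation scheme in X. Suppose there exist a real Banach space Y and an injective continuous linear map ι : Y → X whose range is a proper subset of X, such that ⋃_n A_n ⊆ range(ι), and for every n ∈ ℕ there exists a constant b_n > 0 with ‖y‖_Y ≤ b_n · ‖ι(y)‖_X whenever ι(y) ∈ A_n (a Bernstein-type inequality). Then (X,(A_n)) satisfies Shapiro's Theorem. -/

import Mathlib

open Metric Filter

/-- `(A n)` together with the map `K` is an approximation scheme in `X`. -/
structure IsApproximationScheme {X : Type*} [NormedAddCommGroup X] [NormedSpace ℝ X]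
    (A : ℕ → Set X) (K : ℕ → ℕ) : Prop where
  subset_succ : ∀ n, A n ⊆ A (n + 1)
  ne_succ : ∀ n, A n ≠ A (n + 1)
  le_K : ∀ n, n ≤ K n
  add_mem : ∀ n, ∀ x ∈ A n, ∀ y ∈ A n, x + y ∈ A (K n)
  smul_mem : ∀ n (c : ℝ), ∀ x ∈ A n, c • x ∈ A n
  dense_union : Dense (⋃ n, A n)

/-- `(X, (A n))` satisfies Shapiro's Theorem: for every nonincreasing positive sequence
`ε` converging to `0` there is `x` with `E(x, A n) ≠ O(ε n)`. -/
def SatisfiesShapiro {X : Type*} [NormedAddCommGroup X] (A : ℕ → Set X) : Prop :=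
  ∀ ε : ℕ → ℝ, (∀ n, 0 < ε n) → Antitone ε → Tendsto ε atTop (nhds 0) →
    ∃ x : X, ¬ ∃ M : ℝ, ∀ n, infDist x (A n) ≤ M * ε n

/-- `E(B, A) = sup_{b ∈ B} E(b, A)`. -/
noncomputable def setApproxError {X : Type*} [NormedAddCommGroup X] (B A : Set X) : ℝ :=
  ⨆ b : B, infDist (b : X) A

/-- `dens_n`-style quantity: `E(S(X), A) = sup_{‖x‖ = 1} E(x, A)`. -/
noncomputable def sphDist {X : Type*} [NormedAddCommGroup X] (A : Set X) : ℝ :=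
  ⨆ x : {x : X // ‖x‖ = 1}, infDist (x : X) A

/-
If `E(x, A n) = O(ε n)` held for every `x`, Baire's theorem would give one constant `M` working
on a whole ball `B(x₀, r)`. Since `A n - A n ⊆ A (K n)` and each `A n` is invariant under scalars,
this becomes the uniform bound `E(z, A (K n)) ≤ (4 M / r) ε n ‖z‖`, so for large `n` every `z` lies
within `‖z‖ / 2` of `A (K n) ⊆ range ι`. The Bernstein inequality controls the preimages of these
approximants, and the iteration from the proof of the open mapping theorem then sums them to a
preimage of `z`: `ι` would be onto.
-/

theorem infDist_sub_le_of_sub_mem {X : Type*} [NormedAddCommGroup X] {S T : Set X}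
    (hS : S.Nonempty) (hST : ∀ a ∈ S, ∀ b ∈ S, a - b ∈ T) (x y : X) :
    infDist (x - y) T ≤ infDist x S + infDist y S := by
  refine le_of_forall_pos_le_add fun δ hδ => ?_
  obtain ⟨a, ha, hxa⟩ := (infDist_lt_iff hS).1 (lt_add_of_pos_right (infDist x S) (half_pos hδ))
  obtain ⟨b, hb, hyb⟩ := (infDist_lt_iff hS).1 (lt_add_of_pos_right (infDist y S) (half_pos hδ))
  calc infDist (x - y) T ≤ dist (x - y) (a - b) := infDist_le_dist_of_mem (hST a ha b hb)
    _ ≤ dist x a + dist y b := dist_sub_sub_le x y a b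
    _ ≤ infDist x S + infDist y S + δ := by linarith

section Cone

variable {X : Type*} [NormedAddCommGroup X] [NormedSpace ℝ X] {S T : Set X}

open scoped Pointwise in
theorem smul_set_eq_of_forall_smul_mem (hT : ∀ (c : ℝ), ∀ a ∈ T, c • a ∈ T) {c : ℝ} (hc : c ≠ 0) :
    c • T = T := by
  refine subset_antisymm (Set.smul_set_subset_iff.2 fun a ha => hT c a ha) fun a ha => ?_
  exact ⟨c⁻¹ • a, hT _ a ha, smul_inv_smul₀ hc a⟩

theorem infDist_smul_of_forall_smul_mem (hT : ∀ (c : ℝ), ∀ a ∈ T, c • a ∈ T) (c : ℝ) (x : X) :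
    infDist (c • x) T = |c| * infDist x T := by
  rcases eq_or_ne c 0 with rfl | hc
  · rcases T.eq_empty_or_nonempty with rfl | ⟨a, ha⟩
    · simp
    · simpa using infDist_zero_of_mem (by simpa using hT 0 a ha)
  · rw [← Real.norm_eq_abs, ← infDist_smul₀ hc, smul_set_eq_of_forall_smul_mem hT hc]

theorem infDist_le_mul_norm_of_ball (hS : S.Nonempty) (hST : ∀ a ∈ S, ∀ b ∈ S, a - b ∈ T)
    (hT : ∀ (c : ℝ), ∀ a ∈ T, c • a ∈ T) {x₀ : X} {r D : ℝ} (hr : 0 < r)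
    (hball : ∀ x ∈ ball x₀ r, infDist x S ≤ D) (z : X) :
    infDist z T ≤ 4 * D / r * ‖z‖ := by
  rcases eq_or_ne z 0 with rfl | hz
  · simpa using (infDist_smul_of_forall_smul_mem hT 0 (0 : X)).le
  have hz' : 0 < ‖z‖ := norm_pos_iff.2 hz
  set t := r / (2 * ‖z‖)
  have ht : 0 < t := by positivity
  have htz : t • z ∈ ball (0 : X) r := by
    rw [mem_ball_zero_iff, norm_smul, Real.norm_of_nonneg ht.le, div_mul_eq_mul_div,
      div_lt_iff₀ (by positivity)]
    nlinarith
  have hdiff : t * infDist z T ≤ 2 * D := by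
    rw [← abs_of_pos ht, ← infDist_smul_of_forall_smul_mem hT]
    have hshift := infDist_sub_le_of_sub_mem hS hST (x₀ + t • z) x₀
    rw [add_sub_cancel_left] at hshift
    have h₁ := hball (x₀ + t • z) (by simpa using htz)
    linarith [hball x₀ (mem_ball_self hr)]
  calc infDist z T ≤ 2 * D / t := by rw [le_div_iff₀ ht]; linarith
    _ = 4 * D / r * ‖z‖ := by simp only [t]; field_simp; ring

theorem exists_mem_norm_sub_le_half_mul_norm (hT : T.Nonempty)
    (hcone : ∀ (c : ℝ), ∀ a ∈ T, c • a ∈ T) {q : ℝ} (hq : q < 1 / 2)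
    (h : ∀ z, infDist z T ≤ q * ‖z‖) (z : X) : ∃ a ∈ T, ‖z - a‖ ≤ 1 / 2 * ‖z‖ := by
  rcases eq_or_ne z 0 with rfl | hz
  · obtain ⟨a, ha⟩ := hT
    exact ⟨0, by simpa using hcone 0 a ha, by simp⟩
  have hlt : infDist z T < 1 / 2 * ‖z‖ :=
    (h z).trans_lt (mul_lt_mul_of_pos_right hq (norm_pos_iff.2 hz))
  obtain ⟨a, ha, hza⟩ := (infDist_lt_iff hT).1 hlt
  exact ⟨a, ha, by rw [← dist_eq_norm]; exact hza.le⟩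

end Cone

theorem exists_interior_nonempty_of_forall_exists_bound {X : Type*} [TopologicalSpace X]
    [BaireSpace X] [Nonempty X] {g : ℕ → X → ℝ} (hg : ∀ n, Continuous (g n)) {ε : ℕ → ℝ}
    (hε : ∀ n, 0 ≤ ε n) (h : ∀ x, ∃ M, ∀ n, g n x ≤ M * ε n) :
    ∃ M : ℕ, (interior {x | ∀ n, g n x ≤ M * ε n}).Nonempty := by
  refine nonempty_interior_of_iUnion_of_closed (fun M : ℕ => ?_) ?_
  · simp only [Set.ofPred_forall]
    exact isClosed_iInter fun n => isClosed_le (hg n) continuous_const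
  · refine Set.eq_univ_of_forall fun x => ?_
    obtain ⟨M, hM⟩ := h x
    refine Set.mem_iUnion.2 ⟨⌈M⌉₊, fun n => (hM n).trans ?_⟩
    exact mul_le_mul_of_nonneg_right (Nat.le_ceil M) (hε n)

-- The second half of the proof of `ContinuousLinearMap.exists_preimage_norm_le`.
theorem ContinuousLinearMap.surjective_of_exists_approx_preimage {𝕜 E F : Type*}
    [NontriviallyNormedField 𝕜] [NormedAddCommGroup E] [NormedSpace 𝕜 E] [CompleteSpace E]
    [NormedAddCommGroup F] [NormedSpace 𝕜 F] (f : E →L[𝕜] F) (C : ℝ)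
    (h : ∀ y, ∃ x, ‖y - f x‖ ≤ 1 / 2 * ‖y‖ ∧ ‖x‖ ≤ C * ‖y‖) : Function.Surjective f := by
  choose g hg using h
  intro y
  set r : F → F := fun z => z - f (g z)
  have hr : ∀ n, ‖r^[n] y‖ ≤ (1 / 2) ^ n * ‖y‖ := by
    intro n
    induction n with
    | zero => simp
    | succ n ih =>
      rw [Function.iterate_succ_apply', pow_succ', mul_assoc]
      exact (hg _).1.trans (by gcongr)
  have hr_summable : Summable fun n => ‖r^[n] y‖ :=
    .of_nonneg_of_le (fun n => norm_nonneg _) hr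
      ((summable_geometric_of_lt_one (by norm_num) (by norm_num)).mul_right _)
  have hu : Summable fun n => g (r^[n] y) :=
    .of_norm_bounded (hr_summable.mul_left C) fun n => (hg _).2
  have hpartial : ∀ n, f (∑ i ∈ Finset.range n, g (r^[i] y)) = y - r^[n] y := by
    intro n
    induction n with
    | zero => simp
    | succ n ih =>
      rw [Finset.sum_range_succ, map_add, ih, Function.iterate_succ_apply']
      simp only [r]
      abel
  have hr_lim : Tendsto (fun n => r^[n] y) atTop (nhds 0) := by
    refine squeeze_zero_norm hr ?_
    simpa using (tendsto_pow_atTop_nhds_zero_of_lt_one (r := (1 / 2 : ℝ)) (by norm_num)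
      (by norm_num)).mul_const ‖y‖
  refine ⟨∑' n, g (r^[n] y), tendsto_nhds_unique ?_ (by simpa using tendsto_const_nhds.sub hr_lim)⟩
  simpa only [Function.comp_def, hpartial] using
    (f.continuous.tendsto _).comp hu.hasSum.tendsto_sum_nat

theorem ContinuousLinearMap.surjective_of_bernstein {𝕜 E F : Type*}
    [NontriviallyNormedField 𝕜] [NormedAddCommGroup E] [NormedSpace 𝕜 E] [CompleteSpace E]
    [NormedAddCommGroup F] [NormedSpace 𝕜 F] (f : E →L[𝕜] F) {S : Set F} {b : ℝ}
    (hS : S ⊆ Set.range f) (hbern : ∀ x, f x ∈ S → ‖x‖ ≤ b * ‖f x‖)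
    (happrox : ∀ y, ∃ a ∈ S, ‖y - a‖ ≤ 1 / 2 * ‖y‖) : Function.Surjective f := by
  refine f.surjective_of_exists_approx_preimage (2 * |b|) fun y => ?_
  obtain ⟨a, ha, hya⟩ := happrox y
  obtain ⟨x, rfl⟩ := hS ha
  have hfx : ‖f x‖ ≤ 2 * ‖y‖ := by
    linarith [norm_le_norm_add_norm_sub' (f x) y, norm_sub_rev y (f x), norm_nonneg y]
  refine ⟨x, hya, (hbern x ha).trans ?_⟩
  calc b * ‖f x‖ ≤ |b| * ‖f x‖ := by gcongr; exact le_abs_self b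
    _ ≤ 2 * |b| * ‖y‖ := by rw [mul_comm 2, mul_assoc]; gcongr

namespace IsApproximationScheme

variable {X : Type*} [NormedAddCommGroup X] [NormedSpace ℝ X] {A : ℕ → Set X} {K : ℕ → ℕ}

theorem monotone (hA : IsApproximationScheme A K) : Monotone A :=
  monotone_nat_of_le_succ hA.subset_succ

theorem nonempty (hA : IsApproximationScheme A K) {n : ℕ} (hn : 1 ≤ n) : (A n).Nonempty := by
  obtain ⟨x, hx, -⟩ := Set.not_subset.1 fun h => hA.ne_succ 0 (subset_antisymm (hA.subset_succ 0) h)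
  exact ⟨x, hA.monotone hn hx⟩

theorem sub_mem (hA : IsApproximationScheme A K) {n : ℕ} {a b : X} (ha : a ∈ A n) (hb : b ∈ A n) :
    a - b ∈ A (K n) := by
  simpa [sub_eq_add_neg] using hA.add_mem n a ha _ (hA.smul_mem n (-1) b hb)

end IsApproximationScheme

theorem stmt14_general {X : Type*} [NormedAddCommGroup X] [NormedSpace ℝ X] [CompleteSpace X]
    (A : ℕ → Set X) (K : ℕ → ℕ)
    (hA : IsApproximationScheme A K)
    {Y : Type*} [NormedAddCommGroup Y] [NormedSpace ℝ Y] [CompleteSpace Y]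
    (ι : Y →L[ℝ] X)
    (hproper : Set.range ι ≠ Set.univ)
    (hsub : (⋃ n, A n) ⊆ Set.range ι)
    (hbern : ∀ n : ℕ, ∃ b : ℝ, 0 < b ∧ ∀ y : Y, ι y ∈ A n → ‖y‖ ≤ b * ‖ι y‖) :
    SatisfiesShapiro A := by
  intro ε hpos _ htend
  by_contra! hbounded
  obtain ⟨M, x₀, hx₀⟩ := exists_interior_nonempty_of_forall_exists_bound
    (fun n => continuous_infDist_pt (A n)) (fun n => (hpos n).le) hbounded
  obtain ⟨r, hr, hball⟩ := isOpen_iff.1 isOpen_interior x₀ hx₀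
  obtain ⟨n, hn⟩ : ∃ n, 4 * (M * ε (n + 1)) / r < 1 / 2 := by
    have hlim : Tendsto (fun n => 4 * (M * ε (n + 1)) / r) atTop (nhds 0) := by
      simpa using
        (((htend.comp (tendsto_add_atTop_nat 1)).const_mul (M : ℝ)).const_mul 4).div_const r
    exact (hlim.eventually_lt_const (by norm_num)).exists
  have hKn : 1 ≤ K (n + 1) := (Nat.le_add_left 1 n).trans (hA.le_K _)
  obtain ⟨b, -, hb⟩ := hbern (K (n + 1))
  refine hproper (Set.range_eq_univ.2 (ι.surjective_of_bernstein
    (fun a ha => hsub (Set.mem_iUnion.2 ⟨_, ha⟩)) hb ?_))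
  exact exists_mem_norm_sub_le_half_mul_norm (hA.nonempty hKn) (hA.smul_mem _) hn
    (infDist_le_mul_norm_of_ball (hA.nonempty (Nat.le_add_left 1 n))
      (fun a ha b hb => hA.sub_mem ha hb)
      (hA.smul_mem _) hr fun x hx => interior_subset (hball hx) (n + 1))

theorem stmt14 {X : Type*} [NormedAddCommGroup X] [NormedSpace ℝ X] [CompleteSpace X]
    (hX : ¬ FiniteDimensional ℝ X) (A : ℕ → Set X) (K : ℕ → ℕ)
    (hA : IsApproximationScheme A K)
    {Y : Type*} [NormedAddCommGroup Y] [NormedSpace ℝ Y] [CompleteSpace Y]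
    (ι : Y →L[ℝ] X) (hinj : Function.Injective ι)
    (hproper : Set.range ι ≠ Set.univ)
    (hsub : (⋃ n, A n) ⊆ Set.range ι)
    (hbern : ∀ n : ℕ, ∃ b : ℝ, 0 < b ∧ ∀ y : Y, ι y ∈ A n → ‖y‖ ≤ b * ‖ι y‖) :
    SatisfiesShapiro A :=
  stmt14_general A K hA ι hproper hsub hbern
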